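/- Distribution over different operators: for compatible channels C₁ : X×Y₁ → ℝ, C₂ : X×Y₂ → ℝ, C₃ : X×Y₃ → ℝ and p, q ∈ [0,1], (i) C₁ ∥ (C₂ ⊞_p C₃) ≐ (C₁ ∥ C₂) ⊞_p (C₁ ∥ C₃); (ii) C₁ ∥ (C₂ ⊕_p C₃) = (C₁ ∥ C₂) ⊕_p (C₁ ∥ C₃); and (iii) C₁ ⊞_p (C₂ ⊕_q C₃) = (C₁ ⊞_p C₂) ⊕_q (C₁ ⊞_p C₃). -/

import Mathlib

open Finset

/-- A channel with input set `X` and output set `Y`: entries are nonnegative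
and each row sums to `1`. -/
def IsChannel {X Y : Type*} [Fintype Y] (C : X → Y → ℝ) : Prop :=
  (∀ x y, 0 ≤ C x y) ∧ ∀ x, ∑ y, C x y = 1

/-- A channel with input set `X` whose output set is the finset `S` of a common
ambient type `Ω`: entries are nonnegative, each row sums to `1` over `S`, and
entries vanish outside `S`. -/
def IsChannelOn {X Ω : Type*} (S : Finset Ω) (C : X → Ω → ℝ) : Prop :=
  (∀ x y, 0 ≤ C x y) ∧ (∀ x, ∑ y ∈ S, C x y = 1) ∧ ∀ x y, y ∉ S → C x y = 0

/-- Parallel composition `C₁ ∥ C₂`. -/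
def par {X Y₁ Y₂ : Type*} (C₁ : X → Y₁ → ℝ) (C₂ : X → Y₂ → ℝ) : X → Y₁ × Y₂ → ℝ :=
  fun x y => C₁ x y.1 * C₂ x y.2

/-- Visible choice `C₁ ⊞_p C₂`, on the disjoint union of the output sets. -/
def vis {X Y₁ Y₂ : Type*} (p : ℝ) (C₁ : X → Y₁ → ℝ) (C₂ : X → Y₂ → ℝ) : X → Y₁ ⊕ Y₂ → ℝ :=
  fun x => Sum.elim (fun y => p * C₁ x y) (fun y => (1 - p) * C₂ x y)

/-- Hidden choice `C₁ ⊕_p C₂` for channels whose output sets lie in a common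
ambient type (pointwise convex combination; this agrees with the case analysis
on `Y₁ ∩ Y₂`, `Y₁ \ Y₂`, `Y₂ \ Y₁` since channels vanish outside their output sets). -/
def hid {X Ω : Type*} (p : ℝ) (C₁ C₂ : X → Ω → ℝ) : X → Ω → ℝ :=
  fun x y => p * C₁ x y + (1 - p) * C₂ x y

/-- Equality up to a permutation of the output set, `C₁ ≐ C₂`. -/
def PermEq {X Y₁ Y₂ : Type*} (C₁ : X → Y₁ → ℝ) (C₂ : X → Y₂ → ℝ) : Prop :=
  ∃ ψ : Y₁ ≃ Y₂, ∀ x y, C₁ x y = C₂ x (ψ y)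

/-- Cascading `CD` of channels. -/
def cascade {X Y Z : Type*} [Fintype Y] (C : X → Y → ℝ) (D : Y → Z → ℝ) : X → Z → ℝ :=
  fun x z => ∑ y, C x y * D y z

/-- `Refines C₁ C₂` (written `C₁ ⊑ C₂`): there is a channel `D` with `C₁D = C₂`. -/
def Refines {X Y₁ Y₂ : Type*} [Fintype Y₁] [Fintype Y₂] (C₁ : X → Y₁ → ℝ)
    (C₂ : X → Y₂ → ℝ) : Prop :=
  ∃ D : Y₁ → Y₂ → ℝ, IsChannel D ∧ cascade C₁ D = C₂

/-- Equivalence of channels: mutual refinement. -/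
def EquivCh {X Y₁ Y₂ : Type*} [Fintype Y₁] [Fintype Y₂] (C₁ : X → Y₁ → ℝ)
    (C₂ : X → Y₂ → ℝ) : Prop :=
  Refines C₁ C₂ ∧ Refines C₂ C₁

/-- A prior: a probability distribution on the finite input set `X`. -/
def IsPrior {X : Type*} [Fintype X] (π : X → ℝ) : Prop :=
  (∀ x, 0 ≤ π x) ∧ ∑ x, π x = 1

/-- A gain function `g : W × X → [0,1]`. -/
def IsGain {W X : Type*} (g : W → X → ℝ) : Prop :=
  ∀ w x, 0 ≤ g w x ∧ g w x ≤ 1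

/-- Posterior g-vulnerability `V_g[π, C]`. -/
noncomputable def postV {W X Y : Type*} [Fintype W] [Nonempty W] [Fintype X] [Fintype Y]
    (π : X → ℝ) (g : W → X → ℝ) (C : X → Y → ℝ) : ℝ :=
  ∑ y, univ.sup' univ_nonempty fun w => ∑ x, C x y * π x * g w x

section Distributivity

variable {X Y₁ Y₂ Y₃ : Type*} (p : ℝ) (C₁ : X → Y₁ → ℝ)

theorem par_vis_permEq (C₂ : X → Y₂ → ℝ) (C₃ : X → Y₃ → ℝ) :
    PermEq (par C₁ (vis p C₂ C₃)) (vis p (par C₁ C₂) (par C₁ C₃)) :=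
  ⟨Equiv.prodSumDistrib Y₁ Y₂ Y₃, by
    rintro x ⟨y₁, y₂ | y₃⟩ <;>
      simp only [par, vis, Equiv.prodSumDistrib_apply_left, Equiv.prodSumDistrib_apply_right,
        Sum.elim_inl, Sum.elim_inr] <;> ring⟩

theorem par_hid (C₂ C₃ : X → Y₂ → ℝ) :
    par C₁ (hid p C₂ C₃) = hid p (par C₁ C₂) (par C₁ C₃) := by
  funext x y
  simp only [par, hid]
  ring

theorem vis_hid (q : ℝ) (C₂ C₃ : X → Y₂ → ℝ) :
    vis p C₁ (hid q C₂ C₃) = hid q (vis p C₁ C₂) (vis p C₁ C₃) := by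
  funext x y
  cases y <;> simp only [vis, hid, Sum.elim_inl, Sum.elim_inr] <;> ring

end Distributivity

theorem distribution_over_different_operators {X Y₁ Ω : Type*}
    (C₁ : X → Y₁ → ℝ)
    (C₂ C₃ : X → Ω → ℝ)
    (p q : ℝ) :
    PermEq (par C₁ (vis p C₂ C₃)) (vis p (par C₁ C₂) (par C₁ C₃)) ∧
    par C₁ (hid p C₂ C₃) = hid p (par C₁ C₂) (par C₁ C₃) ∧
    vis p C₁ (hid q C₂ C₃) = hid q (vis p C₁ C₂) (vis p C₁ C₃) :=
  ⟨par_vis_permEq p C₁ C₂ C₃, par_hid p C₁ C₂ C₃, vis_hid p C₁ q C₂ C₃⟩
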